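/- arXiv:2212.08491 — 2 statements merged into one kernel-verified Lean document; each statement's English description precedes it below -/
import Mathlib

section
/- Suppose m and n are distinct odd integers with m, n ≥ 3, and that for all distinct x, y ∈ G the faces of the darts (x,y) and (y,x) are simple cycles, one of length m and the other of length n. Then there is no bijection σ : G → G with σ(0) = 0 which is an orientation-reversing automorphism, i.e., no such σ satisfies σ(x + ρ₀(y−x)) = σ(x) + ρ₀^{−1}(σ(y) − σ(x)) for every dart (x,y). -/
/-- The face-tracing map: it sends the dart `(x, y)` to `(y, y + ρ₀(x − y))`. -/
def faceMap {G : Type*} [AddCommGroup G] (ρ₀ : G → G) : G × G → G × G :=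
  fun p => (p.2, p.2 + ρ₀ (p.1 - p.2))

/-- The face of the dart `p` (its orbit under the face-tracing map) is a simple cycle of
length `k`: it consists of exactly `k` darts whose first components are pairwise distinct. -/
def IsSimpleCycleFace {G : Type*} [AddCommGroup G] (ρ₀ : G → G) (k : ℕ) (p : G × G) : Prop :=
  (faceMap ρ₀)^[k] p = p ∧
    ∀ i < k, ∀ j < k, ((faceMap ρ₀)^[i] p).1 = ((faceMap ρ₀)^[j] p).1 → i = j

/-!
The relation `σ ρ₀ = ρ₀⁻¹ σ` (the case `x = 0`) makes `σ` a reflection of the cycle `ρ₀`: it is an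
involution, and the reflection `u ↦ ρ₀ (σ u)` fixes at most two points of the cycle.  The dart
reversal `(x, y) ↦ (σ y, σ x)` conjugates the face-tracing map to its inverse, so it maps every face
onto a face of the same length traversed backwards.

If `σ z = z` for some `z ≠ 0`, the reversal exchanges `(0, z)` and `(z, 0)`, whose faces then have
the same length, although one has length `m` and the other `n`.  Otherwise, for `y ≠ 0` the dart
`(σ y, y)` is fixed by the reversal, and the reversal acts on its face, of odd length, as a
reflection; the vertex opposite the fixed dart is fixed by `σ`, hence is `0`, and the next vertex
`u` satisfies `ρ₀ (σ u) = u`.  So every `y ≠ 0` lies on one of at most two faces through `0`,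
within `max m n` steps, and `2mn ≤ 2 max m n`, which is absurd.
-/

theorem Nat.two_mul_mod_eq_of_dvd_two_mul {N k : ℕ} (h : N ∣ 2 * k) (hk : ¬ N ∣ k) :
    2 * (k % N) = N := by
  have hN : N ≠ 0 := by rintro rfl; simp_all
  have hlt : k % N < N := Nat.mod_lt k (Nat.pos_of_ne_zero hN)
  have hpos : 0 < k % N := Nat.pos_of_ne_zero fun h0 => hk (Nat.dvd_of_mod_eq_zero h0)
  have hdvd : N ∣ 2 * (k % N) := by
    rw [← Nat.mod_add_div k N, mul_add] at h
    exact (Nat.dvd_add_left (dvd_mul_of_dvd_right (dvd_mul_right N _) 2)).mp h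
  obtain ⟨c, hc⟩ := hdvd
  have hc1 : c = 1 := by
    rcases Nat.lt_or_ge c 2 with h2 | h2
    · interval_cases c <;> omega
    · nlinarith
  rw [hc, hc1, mul_one]

namespace Function

theorem iterate_eq_or_of_isPeriodicPt_two_mul {α : Type*} {f : α → α} {x : α} {k l : ℕ}
    (hk : IsPeriodicPt f (2 * k) x) (hl : IsPeriodicPt f (2 * l) x) :
    f^[k] x = x ∨ f^[l] x = x ∨ f^[k] x = f^[l] x := by
  by_contra! h
  have hk' := Nat.two_mul_mod_eq_of_dvd_two_mul hk.minimalPeriod_dvd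
    fun hd => h.1 (isPeriodicPt_iff_minimalPeriod_dvd.mpr hd)
  have hl' := Nat.two_mul_mod_eq_of_dvd_two_mul hl.minimalPeriod_dvd
    fun hd => h.2.1 (isPeriodicPt_iff_minimalPeriod_dvd.mpr hd)
  apply h.2.2
  rw [← iterate_mod_minimalPeriod_eq, ← iterate_mod_minimalPeriod_eq (n := l)]
  congr 1
  omega

end Function

namespace Function.Semiconj

variable {α : Type*} {ρ₀ : Equiv.Perm α} {σ : α → α}

theorem perm_pow_inv (hσ : Semiconj σ ρ₀ ⇑(ρ₀⁻¹)) (k : ℕ) : Semiconj σ ⇑(ρ₀ ^ k) ⇑((ρ₀ ^ k)⁻¹) := by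
  simpa only [Equiv.Perm.iterate_eq_pow, inv_pow] using hσ.iterate_right k

theorem perm_comp (hσ : Semiconj σ ρ₀ ⇑(ρ₀⁻¹)) : Semiconj (ρ₀ ∘ σ) ρ₀ ⇑(ρ₀⁻¹) := fun y => by
  simp [hσ y]

theorem involutive_of_perm_inv [Zero α]
    (hcyc : ∀ a b : α, a ≠ 0 → b ≠ 0 → ∃ k : ℕ, (ρ₀ ^ k) a = b)
    (hσ : Semiconj σ ρ₀ ⇑(ρ₀⁻¹)) (hinj : Injective σ) (hσ0 : σ 0 = 0) : Involutive σ := by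
  intro y
  rcases eq_or_ne y 0 with rfl | hy
  · rw [hσ0, hσ0]
  · obtain ⟨k, hk⟩ := hcyc y (σ y) hy fun h => hy (hinj (h.trans hσ0.symm))
    conv_lhs => rw [← hk]
    rw [hσ.perm_pow_inv k y, Equiv.Perm.inv_eq_iff_eq, hk]

theorem card_fixed_le_two [Zero α] [Fintype α] [DecidableEq α]
    (hcyc : ∀ a b : α, a ≠ 0 → b ≠ 0 → ∃ k : ℕ, (ρ₀ ^ k) a = b)
    (hσ : Semiconj σ ρ₀ ⇑(ρ₀⁻¹)) : (Finset.univ.filter fun u => u ≠ 0 ∧ σ u = u).card ≤ 2 := by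
  by_contra! h
  obtain ⟨u, hu, v, hv, w, hw, huv, huw, hvw⟩ := Finset.two_lt_card.mp h
  simp only [Finset.mem_filter, Finset.mem_univ, true_and] at hu hv hw
  have hperiodic : ∀ v, v ≠ 0 → σ v = v →
      ∃ k, IsPeriodicPt ρ₀ (2 * k) u ∧ (⇑ρ₀)^[k] u = v := by
    intro v hv0 hvfix
    obtain ⟨k, rfl⟩ := hcyc u v hu.1 hv0
    refine ⟨k, ?_, by rw [Equiv.Perm.iterate_eq_pow]⟩
    rw [hσ.perm_pow_inv k u, hu.2, Equiv.Perm.inv_eq_iff_eq] at hvfix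
    rw [IsPeriodicPt, IsFixedPt, Equiv.Perm.iterate_eq_pow, two_mul, pow_add,
      Equiv.Perm.mul_apply, ← hvfix]
  obtain ⟨k, hk, rfl⟩ := hperiodic v hv.1 hv.2
  obtain ⟨l, hl, rfl⟩ := hperiodic w hw.1 hw.2
  rcases iterate_eq_or_of_isPeriodicPt_two_mul hk hl with h | h | h
  · exact huv h.symm
  · exact huw h.symm
  · exact hvw h

end Function.Semiconj

def reverseDart {α : Type*} (σ : α → α) (p : α × α) : α × α := (σ p.2, σ p.1)

section Darts

variable {G : Type*} [AddCommGroup G]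

def IsOrientationReversing (ρ₀ : Equiv.Perm G) (σ : G → G) : Prop :=
  ∀ x y : G, x ≠ y → σ (x + ρ₀ (y - x)) = σ x + ρ₀⁻¹ (σ y - σ x)

theorem IsSimpleCycleFace.minimalPeriod_eq {ρ₀ : G → G} {k : ℕ} {p : G × G} (hk : 0 < k)
    (h : IsSimpleCycleFace ρ₀ k p) : Function.minimalPeriod (faceMap ρ₀) p = k := by
  have hper : Function.IsPeriodicPt (faceMap ρ₀) k p := h.1
  refine (hper.minimalPeriod_le hk).antisymm (not_lt.mp fun hlt => ?_)
  have hpos := hper.minimalPeriod_pos hk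
  have := h.2 _ hlt 0 hk (by rw [Function.iterate_minimalPeriod]; rfl)
  omega

variable {ρ₀ : Equiv.Perm G} {σ : G → G}

theorem faceMap_iterate_fst_ne_snd (hρ0 : ρ₀ 0 = 0) {p : G × G} (hp : p.1 ≠ p.2) (i : ℕ) :
    ((faceMap ρ₀)^[i] p).1 ≠ ((faceMap ρ₀)^[i] p).2 := by
  induction i with
  | zero => exact hp
  | succ i ih =>
    rw [Function.iterate_succ_apply']
    intro h
    apply ih
    rw [← sub_eq_zero, ← ρ₀.injective.eq_iff, hρ0]
    exact left_eq_add.mp h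

namespace IsOrientationReversing

variable (hσ : IsOrientationReversing ρ₀ σ)
include hσ

theorem semiconj_rotation (hρ0 : ρ₀ 0 = 0) (hσ0 : σ 0 = 0) : Function.Semiconj σ ρ₀ ⇑(ρ₀⁻¹) := by
  intro y
  rcases eq_or_ne y 0 with rfl | hy
  · rw [hρ0, hσ0, eq_comm, Equiv.Perm.inv_eq_iff_eq, hρ0]
  · simpa [hσ0] using hσ 0 y hy.symm

theorem faceMap_reverseDart_faceMap {p : G × G} (hp : p.1 ≠ p.2) :
    faceMap ρ₀ (reverseDart σ (faceMap ρ₀ p)) = reverseDart σ p := by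
  simp [faceMap, reverseDart, hσ p.2 p.1 hp.symm]

theorem faceMap_iterate_reverseDart_faceMap_iterate (hρ0 : ρ₀ 0 = 0) {p : G × G} (hp : p.1 ≠ p.2)
    (i : ℕ) : (faceMap ρ₀)^[i] (reverseDart σ ((faceMap ρ₀)^[i] p)) = reverseDart σ p := by
  induction i with
  | zero => rfl
  | succ i ih =>
    rw [Function.iterate_succ_apply, Function.iterate_succ_apply',
      hσ.faceMap_reverseDart_faceMap (faceMap_iterate_fst_ne_snd hρ0 hp i), ih]

theorem faceMap_iterate_reverseDart (hρ0 : ρ₀ 0 = 0) {p : G × G} (hp : p.1 ≠ p.2) {k i : ℕ}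
    (hk : Function.IsPeriodicPt (faceMap ρ₀) k p) (hi : i ≤ k) :
    (faceMap ρ₀)^[i] (reverseDart σ p) = reverseDart σ ((faceMap ρ₀)^[k - i] p) := by
  conv_lhs => rw [← hk.eq, ← Nat.add_sub_of_le hi, Function.iterate_add_apply]
  exact hσ.faceMap_iterate_reverseDart_faceMap_iterate hρ0
    (faceMap_iterate_fst_ne_snd hρ0 hp (k - i)) i

theorem isPeriodicPt_reverseDart (hρ0 : ρ₀ 0 = 0) {p : G × G} (hp : p.1 ≠ p.2) {k : ℕ}
    (hk : Function.IsPeriodicPt (faceMap ρ₀) k p) :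
    Function.IsPeriodicPt (faceMap ρ₀) k (reverseDart σ p) := by
  have h := hσ.faceMap_iterate_reverseDart hρ0 hp hk le_rfl
  rwa [Nat.sub_self, Function.iterate_zero_apply] at h

theorem minimalPeriod_faceMap_swap (hρ0 : ρ₀ 0 = 0) {x y : G} (hxy : x ≠ y) (hx : σ x = x)
    (hy : σ y = y) :
    Function.minimalPeriod (faceMap ρ₀) (x, y) = Function.minimalPeriod (faceMap ρ₀) (y, x) := by
  have hswap : ∀ {a b : G}, σ a = a → σ b = b → reverseDart σ (a, b) = (b, a) := by
    intro a b ha hb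
    simp [reverseDart, ha, hb]
  apply Nat.dvd_antisymm
  · apply Function.IsPeriodicPt.minimalPeriod_dvd
    simpa [hswap hy hx] using hσ.isPeriodicPt_reverseDart hρ0 (p := (y, x)) hxy.symm
      (Function.isPeriodicPt_minimalPeriod _ _)
  · apply Function.IsPeriodicPt.minimalPeriod_dvd
    simpa [hswap hx hy] using hσ.isPeriodicPt_reverseDart hρ0 (p := (x, y)) hxy
      (Function.isPeriodicPt_minimalPeriod _ _)

theorem exists_faceMap_iterate_zero_eq (hρ0 : ρ₀ 0 = 0) (hσ0 : σ 0 = 0)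
    (hfix : ∀ z, z ≠ 0 → σ z ≠ z) {p : G × G} (hp : p.1 ≠ p.2) (hψ : reverseDart σ p = p)
    {t : ℕ} (hk : Function.IsPeriodicPt (faceMap ρ₀) (2 * t + 1) p) :
    ∃ u, u ≠ 0 ∧ ρ₀ (σ u) = u ∧ (faceMap ρ₀)^[t] (0, u) = p := by
  set q := (faceMap ρ₀)^[t] p with hq
  -- the reversal fixes `p`, so it reflects the face of `p` about its middle dart `q`
  have hmid : faceMap ρ₀ q = reverseDart σ q := by
    have h := hσ.faceMap_iterate_reverseDart hρ0 hp hk (i := t + 1) (by omega)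
    rwa [hψ, Function.iterate_succ_apply', show 2 * t + 1 - (t + 1) = t by omega] at h
  simp only [faceMap, reverseDart, Prod.mk.injEq] at hmid
  obtain ⟨hfix₂, hσ₁⟩ := hmid
  have hq₂ : q.2 = 0 := by
    by_contra h
    exact hfix _ h hfix₂.symm
  have hq₁ : q.1 ≠ 0 := hq₂ ▸ faceMap_iterate_fst_ne_snd hρ0 hp t
  rw [hq₂, zero_add, sub_zero] at hσ₁
  have hstep : faceMap ρ₀ q = (0, ρ₀ q.1) := by simp [faceMap, hq₂]
  refine ⟨ρ₀ q.1, fun h => hq₁ (ρ₀.injective (h.trans hρ0.symm)), ?_, ?_⟩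
  · rw [(hσ.semiconj_rotation hρ0 hσ0).eq, Equiv.Perm.coe_inv, Equiv.apply_symm_apply, hσ₁]
  · rw [← hstep, hq, ← Function.iterate_succ_apply' (faceMap ρ₀), ← Function.iterate_add_apply,
      show t + (t + 1) = 2 * t + 1 by omega, hk.eq]

open Finset in
theorem card_sub_one_le_two_mul [Fintype G] (hρ0 : ρ₀ 0 = 0) (hσ0 : σ 0 = 0)
    (hcyc : ∀ a b : G, a ≠ 0 → b ≠ 0 → ∃ k : ℕ, (ρ₀ ^ k) a = b) (hσinj : Function.Injective σ)
    (hfix : ∀ z, z ≠ 0 → σ z ≠ z) (K : ℕ)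
    (hodd : ∀ p : G × G, p.1 ≠ p.2 →
      ∃ k, Function.IsPeriodicPt (faceMap ρ₀) k p ∧ Odd k ∧ k ≤ K) :
    Fintype.card G - 1 ≤ 2 * K := by
  classical
  have hrot := hσ.semiconj_rotation hρ0 hσ0
  have hcover : Set.SurjOn (fun x : G × ℕ => ((faceMap ρ₀)^[x.2] (0, x.1)).2)
      ((univ.filter fun u => u ≠ 0 ∧ (ρ₀ ∘ σ) u = u) ×ˢ range K : Finset (G × ℕ))
      (univ.erase 0 : Finset G) := by
    intro y hy
    have hp : (σ y, y).1 ≠ (σ y, y).2 := hfix y (mem_erase.mp hy).1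
    have hψ : reverseDart σ (σ y, y) = (σ y, y) := by
      simp [reverseDart, hrot.involutive_of_perm_inv hcyc hσinj hσ0 y]
    obtain ⟨k, hk, ⟨t, rfl⟩, hkK⟩ := hodd _ hp
    obtain ⟨u, hu0, hu, hut⟩ := hσ.exists_faceMap_iterate_zero_eq hρ0 hσ0 hfix hp hψ hk
    exact ⟨(u, t), by simp [hu0, hu]; omega, by simp [hut]⟩
  have hle := card_le_card_of_surjOn _ hcover
  rw [card_product, card_range, card_erase_of_mem (mem_univ _), card_univ] at hle
  exact hle.trans (Nat.mul_le_mul_right _ (hrot.perm_comp.card_fixed_le_two hcyc))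

end IsOrientationReversing

end Darts

/-- Suppose `m` and `n` are distinct odd integers with `m, n ≥ 3`, `G` is a
finite abelian group of order `2mn+1`, `ρ₀` is a permutation of `G` fixing `0` acting as a single
cycle of length `2mn` on `G \ {0}`, and for all distinct `x, y ∈ G` the faces of the darts
`(x,y)` and `(y,x)` are simple cycles, one of length `m` and the other of length `n`.  Then there
is no bijection `σ : G → G` with `σ(0) = 0` which is an orientation-reversing automorphism. -/
theorem no_orientation_reversing_automorphism
    (m n : ℕ) (hm : 3 ≤ m) (hn : 3 ≤ n) (hmo : Odd m) (hno : Odd n) (hmn : m ≠ n)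
    (G : Type*) [AddCommGroup G] [Fintype G] (hcard : Fintype.card G = 2 * m * n + 1)
    (ρ₀ : Equiv.Perm G) (hρ0 : ρ₀ 0 = 0)
    (hcyc : ∀ a b : G, a ≠ 0 → b ≠ 0 → ∃ k : ℕ, (ρ₀ ^ k) a = b)
    (hfaces : ∀ x y : G, x ≠ y →
      (IsSimpleCycleFace ⇑ρ₀ m (x, y) ∧ IsSimpleCycleFace ⇑ρ₀ n (y, x)) ∨
      (IsSimpleCycleFace ⇑ρ₀ n (x, y) ∧ IsSimpleCycleFace ⇑ρ₀ m (y, x))) :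
    ∀ σ : G → G, Function.Bijective σ → σ 0 = 0 →
      ¬ (∀ x y : G, x ≠ y → σ (x + ρ₀ (y - x)) = σ x + ρ₀⁻¹ (σ y - σ x)) := by
  rintro σ ⟨hσinj, -⟩ hσ0 hrev
  have hσ : IsOrientationReversing ρ₀ σ := hrev
  by_cases hfix : ∃ z, z ≠ 0 ∧ σ z = z
  · obtain ⟨z, hz, hσz⟩ := hfix
    have h := hσ.minimalPeriod_faceMap_swap hρ0 hz.symm hσ0 hσz
    rcases hfaces 0 z hz.symm with ⟨h₁, h₂⟩ | ⟨h₁, h₂⟩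
    · rw [h₁.minimalPeriod_eq (by omega), h₂.minimalPeriod_eq (by omega)] at h
      exact hmn h
    · rw [h₁.minimalPeriod_eq (by omega), h₂.minimalPeriod_eq (by omega)] at h
      exact hmn h.symm
  push Not at hfix
  have hbound := hσ.card_sub_one_le_two_mul hρ0 hσ0 hcyc hσinj hfix (max m n) fun p hp => by
    rcases hfaces p.1 p.2 hp with ⟨h, -⟩ | ⟨h, -⟩
    exacts [⟨m, h.1, hmo, le_max_left _ _⟩, ⟨n, h.1, hno, le_max_right _ _⟩]
  rw [hcard, Nat.add_sub_cancel] at hbound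
  rcases max_choice m n with h | h <;> rw [h] at hbound <;> nlinarith
end

section
/- The full automorphism group of the Archdeacon embedding Π_{m,n} has cardinality equal to the binomial coefficient C(2mn+1, 2) = (2mn+1)·mn; that is, the set of all bijections σ : F → F that are automorphisms of Π_{m,n} (orientation-preserving or orientation-reversing) has exactly (2mn+1)·mn elements. -/
/-!
Write `k = mn`. Then `H` is the group of `k`-th roots of unity, of index two in `Fˣ`, and
`-1 ∉ H` since `k` is odd. The rotation `ρ = ρ₀` commutes with multiplication by `H` and
`ρ² = εξ·`, so `ρ` is a single `2k`-cycle on `Fˣ`. An orientation-preserving automorphism fixing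
`0` commutes with `ρ`, hence is a power of `ρ`: even powers are multiplications by elements of
`H`, and odd powers fail on a dart `x → y` with `x, y, y - x ∈ H`. For an orientation-reversing
`σ`, the function `z ↦ (σ (z + v) - σ v) z` takes at most two values on `Fˣ`; at `v = 0` and
`v = 1` this puts every `x ∉ {0, 1}` among the roots of four quadratics, at most `8` points,
fewer than `2k - 1`. So the automorphisms are the `k (2k + 1)` maps `x ↦ u x + v` with `u ∈ H`.
-/

open Function Finset Polynomial

theorem isPrimitiveRoot_mul_of_coprime {M : Type*} [CommMonoid M] {a b : M}
    (h : (orderOf a).Coprime (orderOf b)) : IsPrimitiveRoot (a * b) (orderOf a * orderOf b) :=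
  (Commute.all a b).orderOf_mul_eq_mul_orderOf_of_coprime h ▸ IsPrimitiveRoot.orderOf _

theorem exists_pow_mul_pow_iff_pow_eq_one {R : Type*} [CommRing R] [IsDomain R] {a b x : R}
    {m n : ℕ} (ha : orderOf a = m) (hb : orderOf b = n) (hmn : m.Coprime n) (hm : 0 < m)
    (hn : 0 < n) : (∃ i < m, ∃ j < n, x = a ^ i * b ^ j) ↔ x ^ (m * n) = 1 := by
  subst ha hb
  constructor
  · rintro ⟨i, -, j, -, rfl⟩
    calc (a ^ i * b ^ j) ^ (orderOf a * orderOf b)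
        = (a ^ orderOf a) ^ (i * orderOf b) * (b ^ orderOf b) ^ (j * orderOf a) := by ring
      _ = 1 := by rw [pow_orderOf_eq_one, pow_orderOf_eq_one, one_pow, one_pow, one_mul]
  · intro hx
    have : NeZero (orderOf a * orderOf b) := ⟨(Nat.mul_pos hm hn).ne'⟩
    obtain ⟨t, -, rfl⟩ := (isPrimitiveRoot_mul_of_coprime hmn).eq_pow_of_pow_eq_one hx
    exact ⟨t % orderOf a, Nat.mod_lt _ hm, t % orderOf b, Nat.mod_lt _ hn,
      by rw [pow_mod_orderOf, pow_mod_orderOf, mul_pow]⟩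

theorem ncard_setOf_pow_eq_one {R : Type*} [CommRing R] [IsDomain R] {ζ : R} {k : ℕ} (hk : 0 < k)
    (hζ : IsPrimitiveRoot ζ k) : {u : R | u ^ k = 1}.ncard = k := by
  have : {u : R | u ^ k = 1} = nthRootsFinset k (1 : R) := by
    ext u
    simp [mem_nthRootsFinset hk]
  rw [this, Set.ncard_coe_finset, hζ.card_nthRootsFinset]

theorem ncard_image_mul_add {R : Type*} [Ring R] (S : Set R) :
    ((fun p : R × R => fun x => p.1 * x + p.2) '' (S ×ˢ Set.univ)).ncard =
      S.ncard * Nat.card R := by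
  rw [Set.ncard_image_of_injective, Set.ncard_prod, Set.ncard_univ]
  intro p q hpq
  have h0 := congrFun hpq 0
  have h1 := congrFun hpq 1
  simp only [mul_zero, zero_add, mul_one] at h0 h1
  exact Prod.ext (by rwa [h0, add_left_inj] at h1) h0

theorem card_filter_quadratic_eq_zero_le_two {K : Type*} [Field K] [Fintype K] [DecidableEq K]
    {a b c : K} (ha : a ≠ 0) : #{x | a * x ^ 2 + b * x + c = 0} ≤ 2 := by
  have hp : C a * X ^ 2 + C b * X + C c ≠ 0 := fun h => by
    simpa [h] using natDegree_quadratic (b := b) (c := c) ha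
  calc #{x | a * x ^ 2 + b * x + c = 0}
      ≤ (C a * X ^ 2 + C b * X + C c).natDegree := by
        refine card_le_degree_of_subset_roots fun x hx => ?_
        rw [mem_roots hp]
        simpa using (mem_filter.mp hx).2
    _ = 2 := natDegree_quadratic ha

theorem card_filter_slopes_mem_le {K : Type*} [Field K] [Fintype K] [DecidableEq K] {σ : K → K}
    (hσ : Injective σ) (P : Finset (K × K)) :
    #{x | ((σ x - σ 0) * x, (σ x - σ 1) * (x - 1)) ∈ P} ≤ 2 * #P := by
  set D := σ 1 - σ 0
  have hD : D ≠ 0 := sub_ne_zero.mpr (hσ.ne one_ne_zero)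
  -- eliminating `σ x` from the two coordinates leaves a quadratic equation for `x`
  calc #{x | ((σ x - σ 0) * x, (σ x - σ 1) * (x - 1)) ∈ P}
      ≤ #(P.biUnion fun p => {x | D * x ^ 2 + (p.2 - p.1 - D) * x + p.1 = 0}) := by
        refine card_le_card fun x hx => ?_
        simp only [mem_filter, mem_univ, true_and, mem_biUnion] at hx ⊢
        exact ⟨_, hx, by ring⟩
    _ ≤ #P * 2 := card_biUnion_le_card_mul _ _ _ fun _ _ =>
        card_filter_quadratic_eq_zero_le_two hD
    _ = 2 * #P := mul_comm _ _

section IndexTwo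

variable {F : Type*} [Field F] [Fintype F] {k : ℕ}

theorem neg_one_ne_one_of_card_eq (hF : Fintype.card F = 2 * k + 1) : (-1 : F) ≠ 1 :=
  Ring.neg_one_ne_one_of_char_ne_two fun h => by
    have := FiniteField.even_card_iff_char_two.mp h
    omega

theorem pow_eq_neg_one_of_pow_ne_one (hF : Fintype.card F = 2 * k + 1) {x : F} (hx : x ≠ 0)
    (h : x ^ k ≠ 1) : x ^ k = -1 := by
  have hsq : (x ^ k) ^ 2 = 1 := by
    rw [← pow_mul, mul_comm, ← FiniteField.pow_card_sub_one_eq_one x hx, hF, Nat.add_sub_cancel]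
  exact (sq_eq_one_iff.mp hsq).resolve_left h

theorem neg_pow_eq_one_of_pow_ne_one (hF : Fintype.card F = 2 * k + 1) (hk : Odd k) {x : F}
    (hx : x ≠ 0) (h : x ^ k ≠ 1) : (-x) ^ k = 1 := by
  rw [hk.neg_pow, pow_eq_neg_one_of_pow_ne_one hF hx h, neg_neg]

theorem neg_pow_ne_one_of_pow_eq_one (hF : Fintype.card F = 2 * k + 1) (hk : Odd k) {x : F}
    (h : x ^ k = 1) : (-x) ^ k ≠ 1 := by
  rw [hk.neg_pow, h]
  exact neg_one_ne_one_of_card_eq hF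

theorem exists_pow_eq_one_and_sub_pow_eq_one (hF : Fintype.card F = 2 * k + 1) (hk : Odd k)
    {g : F} (hg : g ^ k = 1) (hg1 : g ≠ 1) :
    ∃ x y : F, x ^ k = 1 ∧ y ^ k = 1 ∧ (y - x) ^ k = 1 := by
  by_cases h1 : (g - 1) ^ k = 1
  · exact ⟨1, g, one_pow k, hg, h1⟩
  by_cases h2 : (g ^ 2 - 1) ^ k = 1
  · exact ⟨1, g ^ 2, one_pow k, by rw [pow_right_comm, hg, one_pow], h2⟩
  have hg2 : g ^ 2 ≠ 1 := by
    rintro hsq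
    rcases sq_eq_one_iff.mp hsq with rfl | rfl
    · exact hg1 rfl
    · exact neg_pow_ne_one_of_pow_eq_one hF hk (one_pow k) hg
  have h1' : (1 - g) ^ k = 1 := by
    rw [← neg_sub]
    exact neg_pow_eq_one_of_pow_ne_one hF hk (sub_ne_zero.mpr hg1) h1
  have h2' : (1 - g ^ 2) ^ k = 1 := by
    rw [← neg_sub]
    exact neg_pow_eq_one_of_pow_ne_one hF hk (sub_ne_zero.mpr hg2) h2
  have hg0 : 1 - g ≠ 0 := sub_ne_zero.mpr (Ne.symm hg1)
  refine ⟨g, 1 + g, hg, ?_, by rw [add_sub_cancel_right, one_pow]⟩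
  rw [show 1 + g = (1 - g ^ 2) / (1 - g) by field_simp; ring, div_pow, h1', h2', div_one]

end IndexTwo

theorem Function.Commute.exists_eqOn_iterate {α : Type*} {f σ : α → α} {s : Set α} {a : α}
    (hs : ∀ x ∈ s, ∃ j, f^[j] a = x) (hσ : Function.Commute σ f) (ha : σ a ∈ s) :
    ∃ j, Set.EqOn σ f^[j] s := by
  obtain ⟨j, hj⟩ := hs _ ha
  refine ⟨j, fun x hx => ?_⟩
  obtain ⟨i, rfl⟩ := hs x hx
  rw [(hσ.iterate_right i).eq, ← hj, ← iterate_add_apply, ← iterate_add_apply, add_comm]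

/-- `σ` carries the rotation `x + ρ (· - x)` at every vertex `x` to the rotation
`σ x + ρ' (· - σ x)` at `σ x`. -/
def MapsRotation {G : Type*} [AddCommGroup G] (ρ ρ' σ : G → G) : Prop :=
  ∀ x y, x ≠ y → σ (x + ρ (y - x)) = σ x + ρ' (σ y - σ x)

namespace MapsRotation

variable {G : Type*} [AddCommGroup G] {ρ ρ' σ : G → G}

theorem comp_add_sub (h : MapsRotation ρ ρ' σ) (v : G) :
    MapsRotation ρ ρ' fun x => σ (x + v) - σ v := by
  intro x y hxy
  have := h (x + v) (y + v) (by simpa using hxy)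
  simp only [add_sub_add_right_eq_sub, sub_sub_sub_cancel_right] at this ⊢
  rw [add_right_comm, this]
  abel

theorem semiconj (h : MapsRotation ρ ρ' σ) (hσ : σ 0 = 0) (hρ : ρ 0 = 0) (hρ' : ρ' 0 = 0) :
    Semiconj σ ρ ρ' := by
  intro y
  rcases eq_or_ne y 0 with rfl | hy
  · rw [hρ, hσ, hρ']
  · simpa [hσ] using h 0 y hy.symm

end MapsRotation

/-- The rotation at `0` of the Archdeacon embedding, with `H` described as the group of `k`-th
roots of unity. -/
structure IsArchdeaconRotation {F : Type*} [Field F] [Fintype F] (k : ℕ) (ε ξ : F)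
    (ρ : F → F) : Prop where
  card_eq : Fintype.card F = 2 * k + 1
  odd : Odd k
  pow_left : ε ^ k = 1
  pow_right : ξ ^ k = 1
  apply_of_pow_eq_one : ∀ a, a ^ k = 1 → ρ a = -(ξ * a)
  apply_of_pow_ne_one : ∀ a, a ^ k ≠ 1 → ρ a = -(ε * a)

namespace IsArchdeaconRotation

section

variable {F : Type*} [Field F] [Fintype F] {k : ℕ} {ε ξ : F} {ρ : F → F}

theorem ne_zero_of_pow_eq_one (hρ : IsArchdeaconRotation k ε ξ ρ) {x : F} (hx : x ^ k = 1) :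
    x ≠ 0 := by
  rintro rfl
  rw [zero_pow hρ.odd.pos.ne'] at hx
  exact zero_ne_one hx

theorem map_zero (hρ : IsArchdeaconRotation k ε ξ ρ) : ρ 0 = 0 := by
  rw [hρ.apply_of_pow_ne_one 0 fun h => hρ.ne_zero_of_pow_eq_one h rfl, mul_zero, neg_zero]

theorem map_mul (hρ : IsArchdeaconRotation k ε ξ ρ) {u : F} (hu : u ^ k = 1) (z : F) :
    ρ (u * z) = u * ρ z := by
  have huz : (u * z) ^ k = z ^ k := by rw [mul_pow, hu, one_mul]
  by_cases hz : z ^ k = 1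
  · rw [hρ.apply_of_pow_eq_one _ (huz.trans hz), hρ.apply_of_pow_eq_one _ hz]
    ring
  · rw [hρ.apply_of_pow_ne_one _ (huz.trans_ne hz), hρ.apply_of_pow_ne_one _ hz]
    ring

theorem map_map (hρ : IsArchdeaconRotation k ε ξ ρ) (z : F) : ρ (ρ z) = ε * ξ * z := by
  have hF := hρ.card_eq
  have hk := hρ.odd
  by_cases hz : z ^ k = 1
  · have : (-(ξ * z)) ^ k ≠ 1 :=
      neg_pow_ne_one_of_pow_eq_one hF hk (by rw [mul_pow, hρ.pow_right, hz, one_mul])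
    rw [hρ.apply_of_pow_eq_one z hz, hρ.apply_of_pow_ne_one _ this]
    ring
  rcases eq_or_ne z 0 with rfl | hz0
  · rw [hρ.map_zero, hρ.map_zero, mul_zero]
  have : (-(ε * z)) ^ k = 1 :=
    neg_pow_eq_one_of_pow_ne_one hF hk (mul_ne_zero (hρ.ne_zero_of_pow_eq_one hρ.pow_left) hz0)
      (by rwa [mul_pow, hρ.pow_left, one_mul])
  rw [hρ.apply_of_pow_ne_one z hz, hρ.apply_of_pow_eq_one _ this]
  ring

theorem iterate_two_mul (hρ : IsArchdeaconRotation k ε ξ ρ) (i : ℕ) (z : F) :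
    ρ^[2 * i] z = (ε * ξ) ^ i * z := by
  induction i with
  | zero => simp
  | succ i ih =>
    rw [mul_add_one, add_comm, iterate_add_apply, ih, iterate_succ_apply, iterate_one,
      hρ.map_map, pow_succ]
    ring

theorem exists_iterate_one_eq (hρ : IsArchdeaconRotation k ε ξ ρ)
    (hg : IsPrimitiveRoot (ε * ξ) k) {z : F} (hz : z ≠ 0) : ∃ j, ρ^[j] 1 = z := by
  have : NeZero k := ⟨hρ.odd.pos.ne'⟩
  by_cases h : z ^ k = 1
  · obtain ⟨i, -, rfl⟩ := hg.eq_pow_of_pow_eq_one h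
    exact ⟨2 * i, by rw [hρ.iterate_two_mul, mul_one]⟩
  -- off `H`, `z = ρ w` with `w = -ξ⁻¹ z ∈ H`
  have hξ0 := hρ.ne_zero_of_pow_eq_one hρ.pow_right
  have hw : (-(ξ⁻¹ * z)) ^ k = 1 :=
    neg_pow_eq_one_of_pow_ne_one hρ.card_eq hρ.odd (mul_ne_zero (inv_ne_zero hξ0) hz)
      (by rwa [mul_pow, inv_pow, hρ.pow_right, inv_one, one_mul])
  obtain ⟨i, -, hi⟩ := hg.eq_pow_of_pow_eq_one hw
  refine ⟨2 * i + 1, ?_⟩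
  rw [iterate_succ_apply', hρ.iterate_two_mul, mul_one, hi, hρ.apply_of_pow_eq_one _ hw]
  field_simp

theorem not_mapsRotation_self (hρ : IsArchdeaconRotation k ε ξ ρ) (hne : ε ≠ ξ) :
    ¬ MapsRotation ρ ρ ρ := by
  have hF := hρ.card_eq
  have hk := hρ.odd
  have hε0 := hρ.ne_zero_of_pow_eq_one hρ.pow_left
  obtain ⟨x, y, hx, hy, hyx⟩ := exists_pow_eq_one_and_sub_pow_eq_one hF hk
    (g := ξ / ε) (by rw [div_pow, hρ.pow_left, hρ.pow_right, div_one])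
    (by rwa [Ne, div_eq_one_iff_eq hε0, eq_comm])
  intro h
  have hxy : x ≠ y := fun hxy => hρ.ne_zero_of_pow_eq_one hyx (by rw [hxy, sub_self])
  have hξyx : ξ * (y - x) ≠ 0 :=
    mul_ne_zero (hρ.ne_zero_of_pow_eq_one hρ.pow_right) (hρ.ne_zero_of_pow_eq_one hyx)
  have hd : (-(ξ * (y - x))) ^ k ≠ 1 :=
    neg_pow_ne_one_of_pow_eq_one hF hk (by rw [mul_pow, hρ.pow_right, hyx, one_mul])
  have key := h x y hxy
  rw [hρ.apply_of_pow_eq_one _ hyx, hρ.apply_of_pow_eq_one _ hx, hρ.apply_of_pow_eq_one _ hy,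
    show -(ξ * y) - -(ξ * x) = -(ξ * (y - x)) by ring, hρ.apply_of_pow_ne_one _ hd] at key
  by_cases hw : (x + -(ξ * (y - x))) ^ k = 1
  · rw [hρ.apply_of_pow_eq_one _ hw] at key
    exact hne (mul_right_cancel₀ hξyx (by linear_combination key)).symm
  · rw [hρ.apply_of_pow_ne_one _ hw] at key
    exact hne (mul_right_cancel₀ (hρ.ne_zero_of_pow_eq_one hx) (by linear_combination -key))

theorem mapsRotation_mul_add_iff (hρ : IsArchdeaconRotation k ε ξ ρ) {u : F} (hu : u ^ k = 1)
    (v : F) {τ : F → F} : MapsRotation ρ ρ (fun z => u * τ z + v) ↔ MapsRotation ρ ρ τ := by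
  refine forall₃_congr fun x y _ => ?_
  rw [add_sub_add_right_eq_sub, ← mul_sub, hρ.map_mul hu, add_right_comm, ← mul_add,
    add_left_inj, mul_right_inj' (hρ.ne_zero_of_pow_eq_one hu)]

theorem eq_mul_add_of_mapsRotation (hρ : IsArchdeaconRotation k ε ξ ρ)
    (hg : IsPrimitiveRoot (ε * ξ) k) (hne : ε ≠ ξ) {σ : F → F} (hσ : Injective σ)
    (h : MapsRotation ρ ρ σ) : ∃ u, u ^ k = 1 ∧ ∀ x, σ x = u * x + σ 0 := by
  set τ : F → F := fun x => σ x - σ 0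
  have hτ : MapsRotation ρ ρ τ := by simpa using h.comp_add_sub 0
  have hτ0 : τ 0 = 0 := sub_self _
  have hτ1 : τ 1 ≠ 0 := by simpa [τ, sub_eq_zero] using hσ.ne one_ne_zero
  -- `τ` commutes with `ρ`, which is transitive on `Fˣ`, so `τ` is a power of `ρ`
  obtain ⟨j, hj⟩ := Function.Commute.exists_eqOn_iterate (s := {x | x ≠ 0})
    (fun x hx => hρ.exists_iterate_one_eq hg hx) (hτ.semiconj hτ0 hρ.map_zero hρ.map_zero) hτ1
  have hτj : τ = ρ^[j] := funext fun x => by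
    rcases eq_or_ne x 0 with rfl | hx
    · rw [hτ0, iterate_fixed hρ.map_zero]
    · exact hj hx
  have hgi (i : ℕ) : ((ε * ξ) ^ i) ^ k = 1 := by rw [pow_right_comm, hg.pow_eq_one, one_pow]
  obtain ⟨i, rfl | rfl⟩ := Nat.even_or_odd' j
  · refine ⟨(ε * ξ) ^ i, hgi i, fun x => ?_⟩
    have := congrFun hτj x
    simp only [τ, hρ.iterate_two_mul] at this
    linear_combination this
  · refine absurd ?_ (hρ.not_mapsRotation_self hne)
    have hτρ : τ = fun z => (ε * ξ) ^ i * ρ z + 0 := by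
      rw [hτj]
      funext z
      rw [iterate_succ_apply, hρ.iterate_two_mul, add_zero]
    rwa [hτρ, hρ.mapsRotation_mul_add_iff (hgi i)] at hτ

end

section

variable {F : Type*} [Field F] [Fintype F] {k : ℕ} {ε ξ : F} {ρ : Equiv.Perm F} {ψ : F → F}

theorem apply_mul_mul_self_eq (hρ : IsArchdeaconRotation k ε ξ ρ) (hψ : Semiconj ψ ρ ⇑ρ⁻¹)
    (z : F) : ψ (ε * ξ * z) * (ε * ξ * z) = ψ z * z := by
  have h2 : ψ (ε * ξ * z) = ρ⁻¹ (ρ⁻¹ (ψ z)) := by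
    rw [← hρ.map_map]
    exact (hψ.comp_right hψ) z
  have : ε * ξ * ψ (ε * ξ * z) = ψ z := by
    rw [h2, ← hρ.map_map, Equiv.Perm.inv_def, Equiv.apply_symm_apply, Equiv.apply_symm_apply]
  linear_combination z * this

theorem apply_mul_self_eq_or (hρ : IsArchdeaconRotation k ε ξ ρ) (hg : IsPrimitiveRoot (ε * ξ) k)
    (hψ : Semiconj ψ ρ ⇑ρ⁻¹) {z : F} (hz : z ≠ 0) : ψ z * z = ψ 1 ∨ ψ z * z = -ψ (-1) := by
  have : NeZero k := ⟨hρ.odd.pos.ne'⟩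
  have hpow (i : ℕ) (w : F) : ψ ((ε * ξ) ^ i * w) * ((ε * ξ) ^ i * w) = ψ w * w := by
    induction i with
    | zero => rw [pow_zero, one_mul]
    | succ i ih => rw [pow_succ', mul_assoc, hρ.apply_mul_mul_self_eq hψ, ih]
  by_cases h : z ^ k = 1
  · obtain ⟨i, -, rfl⟩ := hg.eq_pow_of_pow_eq_one h
    left
    simpa using hpow i 1
  · obtain ⟨i, -, hi⟩ :=
      hg.eq_pow_of_pow_eq_one (neg_pow_eq_one_of_pow_ne_one hρ.card_eq hρ.odd hz h)
    right
    simpa [hi] using hpow i (-1)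

theorem not_mapsRotation_inv (hρ : IsArchdeaconRotation k ε ξ ρ) (hg : IsPrimitiveRoot (ε * ξ) k)
    (hk : 5 ≤ k) {σ : F → F} (hσ : Injective σ) : ¬ MapsRotation ρ ⇑ρ⁻¹ σ := by
  classical
  intro h
  set ψ : F → F → F := fun v x => σ (x + v) - σ v
  have hψ (v : F) : Semiconj (ψ v) ρ ⇑ρ⁻¹ :=
    (h.comp_add_sub v).semiconj (by simp) hρ.map_zero
      (by rw [Equiv.Perm.inv_eq_iff_eq, hρ.map_zero])
  set P : Finset (F × F) := {ψ 0 1, -ψ 0 (-1)} ×ˢ {ψ 1 1, -ψ 1 (-1)}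
  have hsub : (univ.erase 0).erase 1 ⊆
      ({x | ((σ x - σ 0) * x, (σ x - σ 1) * (x - 1)) ∈ P} : Finset F) := by
    intro x hx
    simp only [mem_erase, mem_univ, and_true] at hx
    have h0 := hρ.apply_mul_self_eq_or hg (hψ 0) hx.2
    have h1 := hρ.apply_mul_self_eq_or hg (hψ 1) (sub_ne_zero.mpr hx.1)
    simp only [mem_filter, mem_univ, true_and, P, mem_product, mem_insert, mem_singleton]
    simp only [ψ, add_zero, sub_add_cancel] at h0 h1 ⊢
    exact ⟨h0, h1⟩
  have hP : #P ≤ 4 := (card_product _ _).trans_le (Nat.mul_le_mul card_le_two card_le_two)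
  have := (card_le_card hsub).trans (card_filter_slopes_mem_le hσ P)
  rw [card_erase_of_mem (by simp), card_erase_of_mem (mem_univ _), card_univ, hρ.card_eq] at this
  omega

theorem setOf_automorphisms_eq (hρ : IsArchdeaconRotation k ε ξ ρ)
    (hg : IsPrimitiveRoot (ε * ξ) k) (hne : ε ≠ ξ) (hk : 5 ≤ k) :
    {σ : F → F | Bijective σ ∧ (MapsRotation ρ ρ σ ∨ MapsRotation ρ ⇑ρ⁻¹ σ)} =
      (fun p : F × F => fun x => p.1 * x + p.2) '' ({u | u ^ k = 1} ×ˢ Set.univ) := by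
  ext σ
  simp only [Set.mem_ofPred_eq, Set.mem_image, Set.mem_prod, Set.mem_univ, and_true,
    Prod.exists]
  constructor
  · rintro ⟨hσ, h | h⟩
    · obtain ⟨u, hu, hσu⟩ := hρ.eq_mul_add_of_mapsRotation hg hne hσ.injective h
      exact ⟨u, σ 0, hu, funext fun x => (hσu x).symm⟩
    · exact absurd h (hρ.not_mapsRotation_inv hg hk hσ.injective)
  · rintro ⟨u, v, hu, rfl⟩
    refine ⟨(Equiv.addRight v).bijective.comp
      (Equiv.mulLeft₀ u (hρ.ne_zero_of_pow_eq_one hu)).bijective, Or.inl ?_⟩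
    exact (hρ.mapsRotation_mul_add_iff hu v (τ := id)).mpr fun _ _ _ => rfl

end

end IsArchdeaconRotation

/-- The full automorphism group of the Archdeacon embedding `Π_{m,n}` has
cardinality `C(2mn+1, 2) = (2mn+1)·mn`: the set of all bijections `σ : F → F` that are
automorphisms of `Π_{m,n}` (orientation-preserving or orientation-reversing) has exactly
`(2mn+1)·mn` elements. -/
theorem archdeacon_full_automorphism_group_card
    (m n : ℕ) (hm : 3 ≤ m) (hn : 3 ≤ n) (hmo : Odd m) (hno : Odd n)
    (hcop : Nat.Coprime m n)
    (F : Type*) [Field F] [Fintype F] (hcard : Fintype.card F = 2 * m * n + 1)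
    (ε ξ : F) (hε : orderOf ε = m) (hξ : orderOf ξ = n)
    (H : Set F) (hH : ∀ x : F, x ∈ H ↔ ∃ i < m, ∃ j < n, x = ε ^ i * ξ ^ j)
    (ρ₀ : Equiv.Perm F)
    (hρ : ∀ a : F, (a ∈ H → ρ₀ a = -(ξ * a)) ∧ (a ∉ H → ρ₀ a = -(ε * a))) :
    {σ : F → F | Function.Bijective σ ∧
      ((∀ x y : F, x ≠ y → σ (x + ρ₀ (y - x)) = σ x + ρ₀ (σ y - σ x)) ∨
       (∀ x y : F, x ≠ y → σ (x + ρ₀ (y - x)) = σ x + ρ₀⁻¹ (σ y - σ x)))}.ncard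
      = (2 * m * n + 1) * (m * n) := by
  have hg : IsPrimitiveRoot (ε * ξ) (m * n) :=
    hε ▸ hξ ▸ isPrimitiveRoot_mul_of_coprime (hε ▸ hξ ▸ hcop)
  obtain rfl : H = {x | x ^ (m * n) = 1} := Set.ext fun x =>
    (hH x).trans (exists_pow_mul_pow_iff_pow_eq_one hε hξ hcop (by omega) (by omega))
  have hρ₀ : IsArchdeaconRotation (m * n) ε ξ ρ₀ :=
    { card_eq := by rw [hcard, mul_assoc]
      odd := hmo.mul hno
      pow_left := by rw [pow_mul, ← hε, pow_orderOf_eq_one, one_pow]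
      pow_right := by rw [mul_comm, pow_mul, ← hξ, pow_orderOf_eq_one, one_pow]
      apply_of_pow_eq_one := fun a => (hρ a).1
      apply_of_pow_ne_one := fun a => (hρ a).2 }
  have hne : ε ≠ ξ := fun h => by
    rw [h, hξ] at hε
    subst hε
    rw [Nat.coprime_self] at hcop
    omega
  have hset := hρ₀.setOf_automorphisms_eq hg hne (by nlinarith)
  simp only [MapsRotation] at hset
  rw [hset, ncard_image_mul_add, ncard_setOf_pow_eq_one (by positivity) hg,
    Nat.card_eq_fintype_card, hcard, mul_comm]
end
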